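/- Fault explanation soundness (irrelevance by time projection): if {Init} w1 {P}, {R} w3 {false}, and {P} π(w2) {R} are valid, where π(w2) removes all events from w2 keeping only its time progressions, then {Init} w1.π(w2).w3 {false} is valid. -/

import Mathlib

open scoped NNReal

/-- Step sequences along a trace (list of symbols). -/
def Steps {C S : Type*} (step : C → S → C → Prop) : C → List S → C → Prop
  | c, [], c' => c = c'
  | c, s :: w, c' => ∃ c'', step c s c'' ∧ Steps step c'' w c'

/-- Hoare validity up to a trace equivalence. -/
def HoareValid {C S : Type*} (step : C → S → C → Prop)
    (equiv : List S → List S → Prop)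
    (P : Set C) (w : List S) (R : Set C) : Prop :=
  ∀ cf ∈ P, ∀ u, equiv u w → ∀ cf', Steps step cf u cf' → cf' ∈ R

/-- The time projection `π`: remove all events from a trace, keeping only
its time progressions. -/
def timeProj {E : Type*} (w : List (E ⊕ ℝ≥0)) : List (E ⊕ ℝ≥0) :=
  w.filterMap fun s => match s with
    | Sum.inl _ => none
    | Sum.inr t => some (Sum.inr t)

section Composition

variable {C S : Type*} {step : C → S → C → Prop}

theorem steps_append_iff {u₁ u₂ : List S} {c c' : C} :
    Steps step c (u₁ ++ u₂) c' ↔ ∃ m, Steps step c u₁ m ∧ Steps step m u₂ c' := by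
  induction u₁ generalizing c with
  | nil => simp [Steps]
  | cons s u ih =>
    simp only [List.cons_append, Steps, ih]
    constructor
    · rintro ⟨c₁, hs, m, hu, hu₂⟩
      exact ⟨m, ⟨c₁, hs, hu⟩, hu₂⟩
    · rintro ⟨m, ⟨c₁, hs, hu⟩, hu₂⟩
      exact ⟨c₁, hs, m, hu, hu₂⟩

theorem HoareValid.append {equiv : List S → List S → Prop}
    (hDecomp : ∀ u w₁ w₂ : List S, equiv u (w₁ ++ w₂) →
      ∃ u₁ u₂, equiv u₁ w₁ ∧ equiv u₂ w₂ ∧ u = u₁ ++ u₂)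
    {P Q R : Set C} {w₁ w₂ : List S}
    (h₁ : HoareValid step equiv P w₁ Q) (h₂ : HoareValid step equiv Q w₂ R) :
    HoareValid step equiv P (w₁ ++ w₂) R := by
  intro c hc u hu c' hsteps
  obtain ⟨u₁, u₂, hu₁, hu₂, rfl⟩ := hDecomp u w₁ w₂ hu
  obtain ⟨m, hs₁, hs₂⟩ := steps_append_iff.mp hsteps
  exact h₂ m (h₁ c hc u₁ hu₁ m hs₁) u₂ hu₂ c' hs₂

end Composition

/-- Fault explanation soundness (irrelevance by time projection): if
`{Init} w1 {P}`, `{R} w3 {false}`, and `{P} π(w2) {R}` are valid, then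
`{Init} w1.π(w2).w3 {false}` is valid. Requires that the trace equivalence
admits decomposition of concatenations. -/
theorem explanation_projection_sound {C E : Type*}
    (step : C → (E ⊕ ℝ≥0) → C → Prop)
    (equiv : List (E ⊕ ℝ≥0) → List (E ⊕ ℝ≥0) → Prop)
    (hDecomp : ∀ u w1 w2 : List (E ⊕ ℝ≥0), equiv u (w1 ++ w2) →
      ∃ u1 u2, equiv u1 w1 ∧ equiv u2 w2 ∧ u = u1 ++ u2)
    (Init P R : Set C) (w1 w2 w3 : List (E ⊕ ℝ≥0))
    (h1 : HoareValid step equiv Init w1 P)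
    (h3 : HoareValid step equiv R w3 (∅ : Set C))
    (h2 : HoareValid step equiv P (timeProj w2) R) :
    HoareValid step equiv Init (w1 ++ timeProj w2 ++ w3) (∅ : Set C) :=
  (h1.append hDecomp h2).append hDecomp h3
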